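/- For real numbers λ > b ≥ 0, μ and ε, (s_b(ε+μ) - μ)² - (s_λ(ε+μ) - μ)² ≤ (|ε| + b)² · I{|ε| > b}, where s_t(x) = sgn(x)(|x| - t)_+ is the soft threshold function. -/

import Mathlib

/-!
Both estimates move the observation `x = ε + μ` towards `0` by at most their threshold, so
`|s_b(x) - μ| ≤ |ε| + b`, which settles the case `|ε| > b`. If `|ε| ≤ b`, then for `x > b`
(the case `x < -b` is symmetric, and for `|x| ≤ b` both estimates vanish) we have
`s_λ(x) ≤ s_b(x) = x - b ≤ μ`: the smaller threshold lands between the larger one and `μ`,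
so its error is the smaller one.
-/

/-- Soft threshold s_t(x) = sgn(x)(|x|-t)_+. -/
noncomputable def soft (t x : ℝ) : ℝ := Real.sign x * max (|x| - t) 0

lemma soft_neg (t x : ℝ) : soft t (-x) = -soft t x := by
  simp only [soft, Real.sign_neg, abs_neg, neg_mul]

lemma soft_of_nonneg {t x : ℝ} (ht : 0 ≤ t) (hx : 0 ≤ x) : soft t x = max (x - t) 0 := by
  rcases hx.eq_or_lt with rfl | hx
  · simp [soft, ht]
  · rw [soft, Real.sign_of_pos hx, abs_of_pos hx, one_mul]

lemma abs_soft_sub_self_le {t : ℝ} (ht : 0 ≤ t) (x : ℝ) : |soft t x - x| ≤ t := by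
  wlog hx : 0 ≤ x generalizing x
  · simpa only [soft_neg, neg_sub_neg, abs_sub_comm] using this (-x) (by linarith)
  rw [soft_of_nonneg ht hx, abs_le]
  constructor <;> cases max_cases (x - t) 0 <;> linarith

lemma abs_soft_add_sub_le {t : ℝ} (ht : 0 ≤ t) (ε μ : ℝ) : |soft t (ε + μ) - μ| ≤ |ε| + t :=
  calc |soft t (ε + μ) - μ| = |(soft t (ε + μ) - (ε + μ)) + ε| := by ring_nf
    _ ≤ |soft t (ε + μ) - (ε + μ)| + |ε| := abs_add_le _ _
    _ ≤ |ε| + t := by linarith [abs_soft_sub_self_le ht (ε + μ)]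

lemma abs_soft_sub_le_abs_soft_sub {b lam x μ : ℝ} (hb : 0 ≤ b) (hbl : b ≤ lam) (hxμ : |x - μ| ≤ b) :
    |soft b x - μ| ≤ |soft lam x - μ| := by
  wlog hx : 0 ≤ x generalizing x μ
  · have := this (x := -x) (μ := -μ) (by rwa [← abs_neg, neg_sub_neg, neg_sub]) (by linarith)
    simpa only [soft_neg, neg_sub_neg, abs_sub_comm] using this
  rw [soft_of_nonneg hb hx, soft_of_nonneg (hb.trans hbl) hx]
  rcases le_total x b with hxb | hbx
  · rw [max_eq_right (by linarith), max_eq_right (by linarith)]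
  · have hμ : x - b ≤ μ := by linarith [(abs_le.mp hxμ).2]
    have hlam : max (x - lam) 0 ≤ x - b := max_le (by linarith) (by linarith)
    rw [max_eq_left (by linarith), abs_of_nonpos (by linarith), abs_of_nonpos (by linarith)]
    linarith

theorem stmt15 (lam b mu eps : ℝ) (hb : 0 ≤ b) (hbl : b < lam) :
    (soft b (eps + mu) - mu)^2 - (soft lam (eps + mu) - mu)^2 ≤
      if b < |eps| then (|eps| + b)^2 else 0 := by
  split_ifs with h
  · calc (soft b (eps + mu) - mu)^2 - (soft lam (eps + mu) - mu)^2
        ≤ (soft b (eps + mu) - mu)^2 := sub_le_self _ (sq_nonneg _)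
      _ ≤ (|eps| + b)^2 := sq_le_sq.mpr ((abs_soft_add_sub_le hb eps mu).trans (le_abs_self _))
  · refine sub_nonpos.mpr (sq_le_sq.mpr (abs_soft_sub_le_abs_soft_sub hb hbl.le ?_))
    simpa using not_lt.mp h
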